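/- arXiv:2306.16849 — 6 statements merged into one kernel-verified Lean document; each statement's English description precedes it below -/
import Mathlib

section
/- Let k and n be nonnegative integers with n ≡ k (mod 2) and n ≥ k+4. Then the spectral radius of the sequential join K_{n−k−3} ∨ K_{k+1} ∨ (2K_1) equals θ(n,k), the largest real root of x³ − (n−4)x² − (n+2k−1)x + 2(k+1)(n−k−4) = 0. -/
open SimpleGraph

noncomputable local instance (priority := 10) decAdjAll {V : Type*} (G : SimpleGraph V) :
    DecidableRel G.Adj := Classical.decRel _

/-- `ρ` is the spectral radius of `G`: the largest real eigenvalue of its adjacency matrix. -/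
def IsSpectralRadius {V : Type*} [Fintype V] [DecidableEq V] (G : SimpleGraph V)
    [DecidableRel G.Adj] (ρ : ℝ) : Prop :=
  IsGreatest {μ : ℝ | Module.End.HasEigenvalue (Matrix.toLin' (G.adjMatrix ℝ)) μ} ρ

/-- The sequential join `G1 ∨ G2 ∨ G3`: edges within each `Gi`, all edges between `G1` and
`G2`, all edges between `G2` and `G3`, and no edges between `G1` and `G3`. -/
def seqJoin3 {A B C : Type*} (G1 : SimpleGraph A) (G2 : SimpleGraph B) (G3 : SimpleGraph C) :
    SimpleGraph (A ⊕ B ⊕ C) :=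
  SimpleGraph.fromRel fun x y =>
    match x, y with
    | Sum.inl a, Sum.inl a' => G1.Adj a a'
    | Sum.inl _, Sum.inr (Sum.inl _) => True
    | Sum.inr (Sum.inl b), Sum.inr (Sum.inl b') => G2.Adj b b'
    | Sum.inr (Sum.inl _), Sum.inr (Sum.inr _) => True
    | Sum.inr (Sum.inr c), Sum.inr (Sum.inr c') => G3.Adj c c'
    | _, _ => False

/-!
Let `a = n - k - 3`, `b = k + 1`, `c = 2` be the sizes of the three parts of `K_a ∨ K_b ∨ cK_1`.
The adjacency matrix maps vectors that are constant on each part to such vectors, acting on the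
three constants by the quotient matrix `[[a-1, b, 0], [a, b-1, c], [0, b, 0]]`, whose characteristic
polynomial is the cubic defining `θ(n, k)`. That cubic is negative at `a`, so its largest root `θ`
exceeds `a`, which makes the quotient eigenvector `(bθ, θ(θ-a+1), b(θ-a+1))` positive. Its lift is a
positive eigenvector of the nonnegative adjacency matrix, and an eigenvalue with a positive
eigenvector `v` bounds every eigenvalue in absolute value: compare an eigenvector `x` with `v` at an
index maximizing `|x i| / v i`.
-/

namespace Matrix

variable {ι : Type*} [Fintype ι] {A : Matrix ι ι ℝ}

theorem abs_mulVec_apply_le_mulVec_abs (hA : ∀ i j, 0 ≤ A i j) (x : ι → ℝ) (i : ι) :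
    |(A *ᵥ x) i| ≤ (A *ᵥ fun j => |x j|) i :=
  (Finset.abs_sum_le_sum_abs _ _).trans_eq <| Finset.sum_congr rfl fun j _ => by
    rw [abs_mul, abs_of_nonneg (hA i j)]

theorem mulVec_apply_mono (hA : ∀ i j, 0 ≤ A i j) {x y : ι → ℝ} (hxy : ∀ j, x j ≤ y j) (i : ι) :
    (A *ᵥ x) i ≤ (A *ᵥ y) i :=
  Finset.sum_le_sum fun j _ => mul_le_mul_of_nonneg_left (hxy j) (hA i j)

theorem abs_le_of_hasEigenvalue_of_pos_eigenvector [DecidableEq ι] (hA : ∀ i j, 0 ≤ A i j)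
    {v : ι → ℝ} (hv : ∀ i, 0 < v i) {θ : ℝ} (hAv : A *ᵥ v = θ • v) {μ : ℝ}
    (hμ : Module.End.HasEigenvalue (toLin' A) μ) : |μ| ≤ θ := by
  obtain ⟨x, hx⟩ := hμ.exists_hasEigenvector
  have hAx : A *ᵥ x = μ • x := by rw [← toLin'_apply]; exact hx.apply_eq_smul
  obtain ⟨j₀, hj₀⟩ := Function.ne_iff.1 hx.2
  obtain ⟨i, -, hi⟩ := Finset.exists_max_image Finset.univ (fun j => |x j| / v j)
    ⟨j₀, Finset.mem_univ _⟩
  set c := |x i| / v i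
  have hxc : ∀ j, |x j| ≤ c * v j := fun j =>
    (div_le_iff₀ (hv j)).1 (hi j (Finset.mem_univ j))
  have hxi : 0 < |x i| := by
    have : 0 < |x j₀| / v j₀ := div_pos (abs_pos.2 hj₀) (hv j₀)
    exact (div_pos_iff_of_pos_right (hv i)).1 (this.trans_le (hi j₀ (Finset.mem_univ j₀)))
  refine le_of_mul_le_mul_right ?_ hxi
  calc |μ| * |x i| = |(A *ᵥ x) i| := by rw [hAx, Pi.smul_apply, smul_eq_mul, abs_mul]
    _ ≤ (A *ᵥ fun j => |x j|) i := abs_mulVec_apply_le_mulVec_abs hA x i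
    _ ≤ (A *ᵥ (c • v)) i := mulVec_apply_mono hA hxc i
    _ = θ * |x i| := by
      rw [mulVec_smul, hAv, Pi.smul_apply, Pi.smul_apply, smul_eq_mul, smul_eq_mul,
        mul_left_comm, div_mul_cancel₀ _ (hv i).ne']

theorem isGreatest_hasEigenvalue_of_pos_eigenvector [DecidableEq ι] [Nonempty ι]
    (hA : ∀ i j, 0 ≤ A i j) {v : ι → ℝ} (hv : ∀ i, 0 < v i) {θ : ℝ} (hAv : A *ᵥ v = θ • v) :
    IsGreatest {μ : ℝ | Module.End.HasEigenvalue (toLin' A) μ} θ := by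
  refine ⟨Module.End.hasEigenvalue_of_hasEigenvector (x := v) ⟨?_, ?_⟩, fun μ hμ =>
    (le_abs_self μ).trans (abs_le_of_hasEigenvalue_of_pos_eigenvector hA hv hAv hμ)⟩
  · rw [Module.End.mem_eigenspace_iff, toLin'_apply, hAv]
  · exact fun h => (hv (Classical.arbitrary ι)).ne' (congrFun h _)

end Matrix

open Matrix

theorem SimpleGraph.adjMatrix_nonneg {V α : Type*} [Zero α] [One α] [Preorder α]
    [ZeroLEOneClass α] (G : SimpleGraph V) [DecidableRel G.Adj] (i j : V) :
    0 ≤ G.adjMatrix α i j := by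
  rw [adjMatrix_apply]
  split
  exacts [zero_le_one, le_rfl]

section SeqJoin

variable {A B C : Type*} {G1 : SimpleGraph A} {G2 : SimpleGraph B} {G3 : SimpleGraph C}
  {a a' : A} {b b' : B} {c c' : C}

@[simp] theorem seqJoin3_adj_inl_inl :
    (seqJoin3 G1 G2 G3).Adj (.inl a) (.inl a') ↔ G1.Adj a a' := by
  simpa [seqJoin3, G1.adj_comm a'] using fun h : G1.Adj a a' => h.ne

@[simp] theorem seqJoin3_adj_inl_inr_inl : (seqJoin3 G1 G2 G3).Adj (.inl a) (.inr (.inl b)) := by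
  simp [seqJoin3]

@[simp] theorem seqJoin3_adj_inl_inr_inr :
    ¬(seqJoin3 G1 G2 G3).Adj (.inl a) (.inr (.inr c)) := by
  simp [seqJoin3]

@[simp] theorem seqJoin3_adj_inr_inl_inl : (seqJoin3 G1 G2 G3).Adj (.inr (.inl b)) (.inl a) := by
  simp [seqJoin3]

@[simp] theorem seqJoin3_adj_inr_inl_inr_inl :
    (seqJoin3 G1 G2 G3).Adj (.inr (.inl b)) (.inr (.inl b')) ↔ G2.Adj b b' := by
  simpa [seqJoin3, G2.adj_comm b'] using fun h : G2.Adj b b' => h.ne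

@[simp] theorem seqJoin3_adj_inr_inl_inr_inr :
    (seqJoin3 G1 G2 G3).Adj (.inr (.inl b)) (.inr (.inr c)) := by
  simp [seqJoin3]

@[simp] theorem seqJoin3_adj_inr_inr_inl : ¬(seqJoin3 G1 G2 G3).Adj (.inr (.inr c)) (.inl a) := by
  simp [seqJoin3]

@[simp] theorem seqJoin3_adj_inr_inr_inr_inl :
    (seqJoin3 G1 G2 G3).Adj (.inr (.inr c)) (.inr (.inl b)) := by
  simp [seqJoin3]

@[simp] theorem seqJoin3_adj_inr_inr_inr_inr :
    (seqJoin3 G1 G2 G3).Adj (.inr (.inr c)) (.inr (.inr c')) ↔ G3.Adj c c' := by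
  simpa [seqJoin3, G3.adj_comm c'] using fun h : G3.Adj c c' => h.ne

end SeqJoin

def quotientCubic (a b c x : ℝ) : ℝ :=
  (x - (a - 1)) * (x ^ 2 - (b - 1) * x - c * b) - a * b * x

theorem exists_gt_quotientCubic_eq_zero {a b c : ℝ} (ha : 1 ≤ a) (hb : 1 ≤ b) (hc : 1 ≤ c) :
    ∃ x, a < x ∧ quotientCubic a b c x = 0 := by
  have hga : quotientCubic a b c a < 0 := by
    have : quotientCubic a b c a = -((b - 1) * a * (a + 1) + c * b) := by
      simp only [quotientCubic]; ring
    rw [this, neg_neg_iff_pos]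
    positivity
  have hgM : 0 < quotientCubic a b c (a + b + c + 1) := by
    have : quotientCubic a b c (a + b + c + 1) =
        (c + 2) * ((a + b + c + 2) * (a + b + c + 1)) - c * (b * (b + c + 2)) := by
      simp only [quotientCubic]; ring
    rw [this, sub_pos]
    have : b * (b + c + 2) ≤ (a + b + c + 2) * (a + b + c + 1) :=
      mul_le_mul (by linarith) (by linarith) (by linarith) (by linarith)
    nlinarith
  have hcont : ContinuousOn (quotientCubic a b c) (Set.Icc a (a + b + c + 1)) := by
    unfold quotientCubic; fun_prop
  obtain ⟨x, hx, hx0⟩ := intermediate_value_Ioo (by linarith) hcont ⟨hga, hgM⟩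
  exact ⟨x, hx.1, hx0⟩

section TopTopBot

variable {α β γ : Type*} [Fintype α] [Fintype β] [Fintype γ] [DecidableEq α] [DecidableEq β]
  [DecidableRel (seqJoin3 (⊤ : SimpleGraph α) (⊤ : SimpleGraph β) (⊥ : SimpleGraph γ)).Adj]

theorem seqJoin3_top_top_bot_adjMatrix_mulVec_sumElim (p q r : ℝ) :
    (seqJoin3 (⊤ : SimpleGraph α) (⊤ : SimpleGraph β) (⊥ : SimpleGraph γ)).adjMatrix ℝ *ᵥ
        Sum.elim (fun _ => p) (Sum.elim (fun _ => q) fun _ => r) =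
      Sum.elim (fun _ => (Fintype.card α - 1) * p + Fintype.card β * q)
        (Sum.elim (fun _ => Fintype.card α * p + (Fintype.card β - 1) * q + Fintype.card γ * r)
          fun _ => Fintype.card β * q) := by
  ext (a | b | c) <;> simp only [mulVec, dotProduct, Fintype.sum_sum_type, adjMatrix_apply]
  · have : Nonempty α := ⟨a⟩
    simp [Finset.sum_ite, ← ne_eq, Finset.filter_ne, Nat.cast_pred Fintype.card_pos]
  · have : Nonempty β := ⟨b⟩
    simp [Finset.sum_ite, ← ne_eq, Finset.filter_ne, Nat.cast_pred Fintype.card_pos, add_assoc]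
  · simp

theorem isSpectralRadius_seqJoin3_top_top_bot [DecidableEq γ]
    (ha : 1 ≤ Fintype.card α) (hb : 1 ≤ Fintype.card β) (hc : 1 ≤ Fintype.card γ) {θ : ℝ}
    (hθ : IsGreatest
      {x | quotientCubic (Fintype.card α) (Fintype.card β) (Fintype.card γ) x = 0} θ) :
    IsSpectralRadius (seqJoin3 (⊤ : SimpleGraph α) (⊤ : SimpleGraph β) (⊥ : SimpleGraph γ)) θ := by
  obtain ⟨x, hαx, hx⟩ := exists_gt_quotientCubic_eq_zero (Nat.one_le_cast.2 ha)
    (Nat.one_le_cast.2 hb) (Nat.one_le_cast.2 hc)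
  have hαθ : (Fintype.card α : ℝ) < θ := hαx.trans_le (hθ.2 hx)
  have : Nonempty α := Fintype.card_pos_iff.1 ha
  refine isGreatest_hasEigenvalue_of_pos_eigenvector (adjMatrix_nonneg _)
    (v := Sum.elim (fun _ => Fintype.card β * θ) (Sum.elim (fun _ => θ * (θ - Fintype.card α + 1))
      fun _ => Fintype.card β * (θ - Fintype.card α + 1))) ?_ ?_
  · rintro (_ | _ | _) <;> simp only [Sum.elim_inl, Sum.elim_inr] <;>
      apply mul_pos <;> linarith [(Nat.one_le_cast.2 hb : (1 : ℝ) ≤ _)]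
  · rw [seqJoin3_top_top_bot_adjMatrix_mulVec_sumElim]
    ext (_ | _ | _) <;> simp only [Sum.elim_inl, Sum.elim_inr, Pi.smul_apply, smul_eq_mul]
    · ring
    · have hθ₀ := hθ.1
      rw [Set.mem_ofPred, quotientCubic] at hθ₀
      linear_combination -hθ₀
    · ring

end TopTopBot

theorem spectralRadius_seqJoin_eq_theta_general (k n : ℕ)
    (hn : k + 4 ≤ n) (θ : ℝ)
    (hθ : IsGreatest {x : ℝ | x ^ 3 - ((n : ℝ) - 4) * x ^ 2 - ((n : ℝ) + 2 * k - 1) * x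
        + 2 * ((k : ℝ) + 1) * ((n : ℝ) - k - 4) = 0} θ) :
    IsSpectralRadius
      (seqJoin3 (⊤ : SimpleGraph (Fin (n - k - 3))) (⊤ : SimpleGraph (Fin (k + 1)))
        (⊥ : SimpleGraph (Fin 2))) θ := by
  have hcast : ((n - k - 3 : ℕ) : ℝ) = n - k - 3 := by
    rw [Nat.sub_sub, Nat.cast_sub (by omega)]
    push_cast
    ring
  refine isSpectralRadius_seqJoin3_top_top_bot (by rw [Fintype.card_fin]; omega) (by simp) (by simp) ?_
  convert hθ using 4 with x
  simp only [quotientCubic, Fintype.card_fin, hcast]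
  push_cast
  ring

theorem spectralRadius_seqJoin_eq_theta (k n : ℕ)
    (hpar : n % 2 = k % 2) (hn : k + 4 ≤ n) (θ : ℝ)
    (hθ : IsGreatest {x : ℝ | x ^ 3 - ((n : ℝ) - 4) * x ^ 2 - ((n : ℝ) + 2 * k - 1) * x
        + 2 * ((k : ℝ) + 1) * ((n : ℝ) - k - 4) = 0} θ) :
    IsSpectralRadius
      (seqJoin3 (⊤ : SimpleGraph (Fin (n - k - 3))) (⊤ : SimpleGraph (Fin (k + 1)))
        (⊥ : SimpleGraph (Fin 2))) θ :=
  spectralRadius_seqJoin_eq_theta_general k n hn θ hθ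
end

section
/- Let k and n be nonnegative integers with n ≡ k (mod 2) and n ≥ k+4. Then the sequential join K_{n−k−3} ∨ K_{k+1} ∨ (2K_1) is not k-factor-critical; that is, there exists a set Q of exactly k vertices such that deleting Q leaves a graph with no perfect matching. -/
open SimpleGraph

theorem seqJoin_not_kFactorCritical (k n : ℕ)
    (hpar : n % 2 = k % 2) (hn : k + 4 ≤ n) :
    ∃ Q : Finset (Fin (n - k - 3) ⊕ Fin (k + 1) ⊕ Fin 2), Q.card = k ∧
      ∀ M : ((seqJoin3 (⊤ : SimpleGraph (Fin (n - k - 3))) (⊤ : SimpleGraph (Fin (k + 1)))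
          (⊥ : SimpleGraph (Fin 2))).induce ((↑Q : Set _)ᶜ)).Subgraph,
        ¬ M.IsPerfectMatching := by
  classical
  set Q : Finset (Fin (n - k - 3) ⊕ Fin (k + 1) ⊕ Fin 2) :=
    (Finset.univ.erase (0 : Fin (k+1))).image (fun i => Sum.inr (Sum.inl i)) with hQ
  refine ⟨Q, ?_, ?_⟩
  · rw [hQ, Finset.card_image_of_injective _ (by intro a b h; simpa using h)]
    simp
  · intro M hM
    obtain ⟨hmatch, hspan⟩ := hM
    have hc0 : (Sum.inr (Sum.inr (0 : Fin 2)) :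
        Fin (n - k - 3) ⊕ Fin (k + 1) ⊕ Fin 2) ∈ ((↑Q : Set _)ᶜ) := by
      simp [hQ]
    have hc1 : (Sum.inr (Sum.inr (1 : Fin 2)) :
        Fin (n - k - 3) ⊕ Fin (k + 1) ⊕ Fin 2) ∈ ((↑Q : Set _)ᶜ) := by
      simp [hQ]
    have hm0 : (Sum.inr (Sum.inl (0 : Fin (k+1))) :
        Fin (n - k - 3) ⊕ Fin (k + 1) ⊕ Fin 2) ∈ ((↑Q : Set _)ᶜ) := by
      simp [hQ]
    set m : ((↑Q : Set (Fin (n - k - 3) ⊕ Fin (k + 1) ⊕ Fin 2))ᶜ : Set _) := ⟨_, hm0⟩ with hmdef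
    -- any matched partner of an outer vertex is m
    have key : ∀ (c : Fin 2) (hc : (Sum.inr (Sum.inr c) :
        Fin (n - k - 3) ⊕ Fin (k + 1) ⊕ Fin 2) ∈ ((↑Q : Set _)ᶜ))
        (w : ((↑Q : Set (Fin (n - k - 3) ⊕ Fin (k + 1) ⊕ Fin 2))ᶜ : Set _)), M.Adj ⟨_, hc⟩ w → w = m := by
      intro c hc w hadj
      have hgadj := M.adj_sub hadj
      obtain ⟨x, hx⟩ := w
      rcases x with a | b | d
      · exfalso
        simp only [comap_adj, Function.Embedding.coe_subtype, seqJoin3,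
          fromRel_adj] at hgadj
        simpa using hgadj
      · have hb : b = 0 := by
          have : (Sum.inr (Sum.inl b) :
              Fin (n - k - 3) ⊕ Fin (k + 1) ⊕ Fin 2) ∉ Q := hx
          by_contra hb0
          exact this (by
            rw [hQ]
            exact Finset.mem_image.mpr ⟨b, Finset.mem_erase.mpr ⟨hb0, Finset.mem_univ b⟩, rfl⟩)
        subst hb
        rfl
      · exfalso
        simp only [comap_adj, Function.Embedding.coe_subtype, seqJoin3,
          fromRel_adj] at hgadj
        simpa using hgadj
    obtain ⟨w0, hw0, _⟩ := hmatch (hspan ⟨_, hc0⟩)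
    obtain ⟨w1, hw1, _⟩ := hmatch (hspan ⟨_, hc1⟩)
    have e0 := key 0 hc0 w0 hw0
    have e1 := key 1 hc1 w1 hw1
    subst e0; subst e1
    obtain ⟨w, hw, huniq⟩ := hmatch (hspan m)
    have h0 := huniq _ hw0.symm
    have h1 := huniq _ hw1.symm
    have h2 := h0.trans h1.symm
    simp at h2
end

section
/- Let k be a nonnegative integer. Then the join K_{k+2} ∨ (4K_1) is not k-factor-critical; that is, there exists a set Q of exactly k vertices such that deleting Q leaves a graph with no perfect matching. -/
/-!
Delete the first `k` vertices of the clique. What remains is `K₂ ∨ 4K₁`, in which the four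
independent vertices have all their neighbours among the two clique vertices. A perfect matching
sends every vertex injectively to its partner, so it would embed four vertices into two.
-/

open SimpleGraph

/-- The join `G1 ∨ G2`: all edges of `G1` and `G2` together with all edges between them. -/
def graphJoin {A B : Type*} (G1 : SimpleGraph A) (G2 : SimpleGraph B) : SimpleGraph (A ⊕ B) :=
  SimpleGraph.fromRel fun x y =>
    match x, y with
    | Sum.inl a, Sum.inl a' => G1.Adj a a'
    | Sum.inl _, Sum.inr _ => True
    | Sum.inr b, Sum.inr b' => G2.Adj b b'
    | Sum.inr _, Sum.inl _ => False

namespace SimpleGraph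

variable {V : Type*} {G : SimpleGraph V}

theorem Subgraph.IsPerfectMatching.encard_le_of_forall_adj_mem {M : G.Subgraph}
    (hM : M.IsPerfectMatching) {s t : Set V} (hst : ∀ v ∈ s, ∀ w, G.Adj v w → w ∈ t) :
    s.encard ≤ t.encard := by
  choose partner hpartner using fun v => (hM.1 (hM.2 v)).exists
  refine Set.encard_le_encard_of_injOn (f := partner)
    (fun v hv => hst v hv _ (M.adj_sub (hpartner v))) fun v _ w _ hvw => ?_
  exact hM.1.eq_of_adj_right (hpartner v) (hvw ▸ hpartner w)

theorem Subgraph.IsPerfectMatching.encard_inter_le_of_induce {S : Set V}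
    {M : (G.induce S).Subgraph} (hM : M.IsPerfectMatching) {s t : Set V}
    (hst : ∀ v ∈ s ∩ S, ∀ w ∈ S, G.Adj v w → w ∈ t) :
    (s ∩ S).encard ≤ (t ∩ S).encard := by
  have key := hM.encard_le_of_forall_adj_mem (s := Subtype.val ⁻¹' s) (t := Subtype.val ⁻¹' t)
    fun v hv w hvw => hst v ⟨hv, v.2⟩ w w.2 hvw
  rwa [← Subtype.val_injective.encard_image, ← Subtype.val_injective.encard_image,
    Subtype.image_preimage_coe, Subtype.image_preimage_coe, Set.inter_comm S,
    Set.inter_comm S] at key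

end SimpleGraph

theorem graphJoin_bot_adj_inr {A B : Type*} (G : SimpleGraph A) {b : B} {w : A ⊕ B}
    (h : (graphJoin G ⊥).Adj (Sum.inr b) w) : w ∈ Set.range Sum.inl := by
  rcases w with a | b'
  · exact ⟨a, rfl⟩
  · simp [graphJoin] at h

theorem graphJoin_bot_encard_inter_range_inr_le {A B : Type*} (G : SimpleGraph A)
    {S : Set (A ⊕ B)} {M : ((graphJoin G ⊥).induce S).Subgraph} (hM : M.IsPerfectMatching) :
    (Set.range Sum.inr ∩ S).encard ≤ (Set.range Sum.inl ∩ S).encard :=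
  hM.encard_inter_le_of_induce fun _ ⟨⟨_, hb⟩, _⟩ _ _ hvw =>
    graphJoin_bot_adj_inr G (hb ▸ hvw)

theorem join_complete_k_add_two_four_not_kFactorCritical (k : ℕ) :
    ∃ Q : Finset (Fin (k + 2) ⊕ Fin 4), Q.card = k ∧
      ∀ M : ((graphJoin (⊤ : SimpleGraph (Fin (k + 2)))
          (⊥ : SimpleGraph (Fin 4))).induce ((↑Q : Set _)ᶜ)).Subgraph,
        ¬ M.IsPerfectMatching := by
  set a : Fin (k + 2) := ⟨k, by omega⟩
  refine ⟨(Finset.Iio a).map .inl, by simp [a], fun M hM => ?_⟩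
  have hindep : (Set.range (Sum.inr : Fin 4 → _) ∩ (Sum.inl '' Set.Iio a)ᶜ).encard = 4 := by
    rw [Set.inter_eq_left.2 ?_, ← Set.image_univ, Sum.inr_injective.encard_image]
    · simp
    · rintro _ ⟨b, rfl⟩ ⟨i, -, hi⟩
      exact Sum.inl_ne_inr hi
  have hclique :
      (Set.range (Sum.inl : _ → Fin (k + 2) ⊕ Fin 4) ∩ (Sum.inl '' Set.Iio a)ᶜ).encard = 2 := by
    rw [← Set.sdiff_eq, ← Set.image_compl_eq_range_sdiff_image Sum.inl_injective, Set.compl_Iio,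
      Sum.inl_injective.encard_image, ← Finset.coe_Ici, Set.encard_coe_eq_coe_finsetCard,
      Fin.card_Ici]
    simp [a]
  have hle := graphJoin_bot_encard_inter_range_inr_le _ hM
  rw [Finset.coe_map, Finset.coe_Iio] at hle
  exact absurd (hindep.symm.trans_le (hle.trans_eq hclique)) (by decide)
end

section
/- Let k be a nonnegative integer. Then the join K_{k+3} ∨ (5K_1) is not k-factor-critical; that is, there exists a set Q of exactly k vertices such that deleting Q leaves a graph with no perfect matching. -/
open SimpleGraph

lemma aux_no_pm (k : ℕ) (Q : Finset (Fin (k + 3) ⊕ Fin 5))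
    (hQr : ∀ b : Fin 5, (Sum.inr b : Fin (k+3) ⊕ Fin 5) ∉ Q)
    (hQl : ∀ a : Fin (k+3), (Sum.inl a : Fin (k+3) ⊕ Fin 5) ∉ Q → k ≤ (a : ℕ))
    (M : ((graphJoin (⊤ : SimpleGraph (Fin (k + 3)))
          (⊥ : SimpleGraph (Fin 5))).induce ((↑Q : Set _)ᶜ)).Subgraph) :
    ¬ M.IsPerfectMatching := by
  classical
  intro hM
  have hmem : ∀ b : Fin 5, (Sum.inr b : Fin (k+3) ⊕ Fin 5) ∈ ((↑Q : Set _)ᶜ) := fun b => hQr b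
  let v : Fin 5 → ↥((↑Q : Set (Fin (k+3) ⊕ Fin 5))ᶜ) := fun b => ⟨Sum.inr b, hmem b⟩
  have hvert : ∀ x, x ∈ M.verts := fun x => hM.2 x
  let g : Fin 5 → ↥((↑Q : Set (Fin (k+3) ⊕ Fin 5))ᶜ) :=
    fun b => (hM.1 (hvert (v b))).choose
  have hadj : ∀ b, M.Adj (v b) (g b) := fun b => (hM.1 (hvert (v b))).choose_spec.1
  have hval : ∀ b : Fin 5, ∃ a : Fin (k+3), (g b).1 = Sum.inl a ∧ k ≤ (a : ℕ) := by
    intro b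
    have h1 : ((graphJoin (⊤ : SimpleGraph (Fin (k + 3)))
        (⊥ : SimpleGraph (Fin 5))).induce ((↑Q : Set _)ᶜ)).Adj (v b) (g b) := M.adj_sub (hadj b)
    have h2 : (graphJoin (⊤ : SimpleGraph (Fin (k + 3)))
        (⊥ : SimpleGraph (Fin 5))).Adj (Sum.inr b) (g b).1 := by
      simpa [SimpleGraph.comap, SimpleGraph.induce, v] using h1
    rcases hga : (g b).1 with a | b'
    · refine ⟨a, rfl, ?_⟩
      have := (g b).2
      rw [hga] at this
      exact hQl a this
    · rw [hga] at h2
      rw [graphJoin] at h2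
      simp [SimpleGraph.fromRel_adj] at h2
  have hginj : Function.Injective g := by
    intro b1 b2 h
    have ha1 : M.Adj (g b1) (v b1) := (hadj b1).symm
    have ha2 : M.Adj (g b1) (v b2) := h ▸ (hadj b2).symm
    have := (hM.1 (M.edge_vert ha1)).unique ha1 ha2
    have : Sum.inr b1 = (Sum.inr b2 : Fin (k+3) ⊕ Fin 5) := congrArg Subtype.val this
    exact Sum.inr_injective this
  let f : Fin 5 → {a : Fin (k+3) // k ≤ (a : ℕ)} :=
    fun b => ⟨(hval b).choose, (hval b).choose_spec.2⟩
  have hfinj : Function.Injective f := by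
    intro b1 b2 h
    apply hginj
    apply Subtype.ext
    rw [(hval b1).choose_spec.1, (hval b2).choose_spec.1]
    exact congrArg (Sum.inl ∘ Subtype.val) h
  have hcard : Fintype.card {a : Fin (k+3) // k ≤ (a : ℕ)} = 3 := by
    rw [Fintype.card_subtype]
    have h3 : (Finset.univ.filter fun a : Fin (k+3) => k ≤ (a : ℕ)).card
        = (k + 3) - (Finset.univ.filter fun a : Fin (k+3) => ¬ k ≤ (a : ℕ)).card := by
      have := Finset.card_filter_add_card_filter_not
        (s := (Finset.univ : Finset (Fin (k+3)))) (p := fun a => k ≤ (a : ℕ))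
      simp only [Finset.card_univ, Fintype.card_fin] at this
      omega
    rw [h3]
    have h2 : (Finset.univ.filter fun a : Fin (k+3) => ¬ k ≤ (a : ℕ))
        = (Finset.range k).attachFin (by
          intro m hm
          exact lt_of_lt_of_le (Finset.mem_range.mp hm) (by omega)) := by
      ext i
      simp [Finset.mem_attachFin, Fin.ext_iff]
    rw [h2, Finset.card_attachFin, Finset.card_range]
    omega
  have := Fintype.card_le_of_injective f hfinj
  rw [hcard, Fintype.card_fin] at this
  omega

theorem join_complete_k_add_three_five_not_kFactorCritical (k : ℕ) :
    ∃ Q : Finset (Fin (k + 3) ⊕ Fin 5), Q.card = k ∧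
      ∀ M : ((graphJoin (⊤ : SimpleGraph (Fin (k + 3)))
          (⊥ : SimpleGraph (Fin 5))).induce ((↑Q : Set _)ᶜ)).Subgraph,
        ¬ M.IsPerfectMatching := by
  classical
  refine ⟨(Finset.univ.filter fun i : Fin (k+3) => (i : ℕ) < k).map
    ⟨Sum.inl, Sum.inl_injective⟩, ?_, ?_⟩
  · rw [Finset.card_map]
    have h2 : (Finset.univ.filter fun i : Fin (k+3) => (i : ℕ) < k)
        = (Finset.range k).attachFin (by
          intro m hm
          exact lt_of_lt_of_le (Finset.mem_range.mp hm) (by omega)) := by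
      ext i
      simp [Finset.mem_attachFin, Fin.ext_iff]
    rw [h2, Finset.card_attachFin, Finset.card_range]
  · intro M
    apply aux_no_pm
    · intro b; simp
    · intro a ha
      simp at ha
      omega
end

section
/- Let k be a nonnegative integer. Then the largest real root of the cubic x³ − (k+2)x² − (3k+5)x + 4(k+1) = 0 is strictly less than (k+1+√(k²+18k+33))/2. In other words, θ(k+6, k) < (k+1+√(k²+18k+33))/2. -/
theorem theta_k_add_six_lt (k : ℕ) (θ : ℝ)
    (hθ : IsGreatest {x : ℝ | x ^ 3 - ((k : ℝ) + 2) * x ^ 2 - (3 * (k : ℝ) + 5) * x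
        + 4 * ((k : ℝ) + 1) = 0} θ) :
    θ < ((k : ℝ) + 1 + Real.sqrt ((k : ℝ) ^ 2 + 18 * k + 33)) / 2 := by
  by_contra h
  push_neg at h
  have hf : θ ^ 3 - ((k : ℝ) + 2) * θ ^ 2 - (3 * (k : ℝ) + 5) * θ + 4 * ((k : ℝ) + 1) = 0 := hθ.1
  set s : ℝ := Real.sqrt ((k : ℝ) ^ 2 + 18 * k + 33) with hs_def
  have hk : (0 : ℝ) ≤ (k : ℝ) := Nat.cast_nonneg k
  have hs0 : 0 ≤ s := Real.sqrt_nonneg _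
  have hs2 : s ^ 2 = (k : ℝ) ^ 2 + 18 * k + 33 := by
    rw [hs_def, Real.sq_sqrt]; nlinarith
  -- s > 3 - k, so θ ≥ (k+1+s)/2 > 2
  have hs3 : s > 3 - (k : ℝ) := by nlinarith [sq_nonneg (s - (3 - (k:ℝ))), sq_nonneg (s + (3 - (k:ℝ)))]
  have hθ2 : θ > 2 := by linarith
  have hd : 2 * θ - ((k : ℝ) + 1) - s ≥ 0 := by linarith
  nlinarith [mul_nonneg (mul_nonneg hd (by linarith : (0:ℝ) ≤ 2 * θ - ((k:ℝ)+1) + s)) (by linarith : (0:ℝ) ≤ θ - 1), hs2]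
end

section
/- Let k ≥ 1 be an integer. Then the largest real root of the cubic x³ − (k+4)x² − (3k+7)x + 8(k+1) = 0 is strictly less than (k+2+√(k²+24k+64))/2. In other words, θ(k+8, k) < (k+2+√(k²+24k+64))/2. -/
theorem theta_k_add_eight_lt (k : ℕ) (hk : 1 ≤ k) (θ : ℝ)
    (hθ : IsGreatest {x : ℝ | x ^ 3 - ((k : ℝ) + 4) * x ^ 2 - (3 * (k : ℝ) + 7) * x
        + 8 * ((k : ℝ) + 1) = 0} θ) :
    θ < ((k : ℝ) + 2 + Real.sqrt ((k : ℝ) ^ 2 + 24 * k + 64)) / 2 := by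
  have hk1 : (1 : ℝ) ≤ (k : ℝ) := by exact_mod_cast hk
  set s : ℝ := Real.sqrt ((k : ℝ) ^ 2 + 24 * k + 64) with hs
  have hnn : (0 : ℝ) ≤ (k : ℝ) ^ 2 + 24 * k + 64 := by positivity
  have hs2 : s ^ 2 = (k : ℝ) ^ 2 + 24 * k + 64 := Real.sq_sqrt hnn
  have hs9 : 9 < s := by
    have : (81 : ℝ) < (k : ℝ) ^ 2 + 24 * k + 64 := by nlinarith
    nlinarith [Real.sqrt_nonneg ((k : ℝ) ^ 2 + 24 * k + 64), hs2]
  have hroot : θ ^ 3 - ((k : ℝ) + 4) * θ ^ 2 - (3 * (k : ℝ) + 7) * θ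
      + 8 * ((k : ℝ) + 1) = 0 := hθ.1
  by_contra h
  push_neg at h
  have hq : 0 ≤ (θ - ((k : ℝ) + 2 + s) / 2) * (θ - ((k : ℝ) + 2 - s) / 2) := by
    apply mul_nonneg <;> nlinarith
  nlinarith [hq, hroot, h, hs9, hk1, mul_nonneg hq (by nlinarith : (0:ℝ) ≤ θ - 2)]
end
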